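/- arXiv:2602.18629 — 2 statements merged into one kernel-verified Lean document; each statement's English description precedes it below -/
import Mathlib

section
/- For any z ∈ ℂ and θ ∈ ℝ, the Jacobi–Anger expansion holds: exp(i z sin θ) = ∑_{m ∈ ℤ} J_m(z) exp(i m θ), where J_m is the Bessel function of the first kind of integer order m, defined by its power series. -/
open Complex

/-!
With `w = exp(iθ)` we have `i z sin θ = (z/2)(w - w⁻¹)`, so
`exp(i z sin θ) = exp(z w/2) exp(-z/(2w))`. Multiplying out the two exponential series gives an
absolutely convergent double series over `(p, q) ∈ ℕ × ℕ` whose `(p, q)` term is a multiple of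
`w ^ (p - q)`. Grouping the terms with `p - q = m` and `min p q = j` and summing over `j` gives
`J_m(z) w ^ m`, i.e. the generating function `exp((z/2)(w - w⁻¹)) = ∑_m J_m(z) w ^ m` for `w ≠ 0`.
-/

/-- Bessel function of the first kind of nonnegative integer order, defined by
its power series. -/
noncomputable def besselJnat (m : ℕ) (z : ℂ) : ℂ :=
  ∑' j : ℕ, (-1 : ℂ) ^ j / ((j.factorial : ℂ) * ((j + m).factorial : ℂ)) * (z / 2) ^ (2 * j + m)

/-- Bessel function of the first kind of integer order: `J_{-m} = (-1)^m J_m`. -/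
noncomputable def besselJint (m : ℤ) (z : ℂ) : ℂ :=
  if 0 ≤ m then besselJnat m.toNat z else (-1 : ℂ) ^ (-m).toNat * besselJnat (-m).toNat z

theorem besselJint_natCast (n : ℕ) (z : ℂ) : besselJint n z = besselJnat n z := by
  simp [besselJint]

theorem besselJint_neg_natCast (n : ℕ) (z : ℂ) :
    besselJint (-n) z = (-1) ^ n * besselJnat n z := by
  cases n with
  | zero => simp [besselJint]
  | succ n => rw [besselJint, if_neg (by omega)]; simp

theorem hasSum_besselJnat (m : ℕ) (z : ℂ) :
    HasSum (fun j : ℕ => (-1 : ℂ) ^ j / ((j.factorial : ℂ) * ((j + m).factorial : ℂ)) *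
      (z / 2) ^ (2 * j + m)) (besselJnat m z) := by
  set r := ‖z / 2‖
  have hbound (j : ℕ) : ‖(-1 : ℂ) ^ j / ((j.factorial : ℂ) * ((j + m).factorial : ℂ)) *
      (z / 2) ^ (2 * j + m)‖ ≤ r ^ m * ((r ^ 2) ^ j / j.factorial) := by
    have hfac : (j.factorial : ℝ) ≤ j.factorial * (j + m).factorial :=
      le_mul_of_one_le_right (by positivity) (by exact_mod_cast (j + m).factorial_pos)
    calc _ = r ^ m * (r ^ 2) ^ j / (j.factorial * (j + m).factorial) := by
          rw [norm_mul, norm_div, norm_pow, norm_pow, norm_neg, norm_one, one_pow, norm_mul,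
            Complex.norm_natCast, Complex.norm_natCast, pow_add, pow_mul]
          ring
      _ ≤ r ^ m * (r ^ 2) ^ j / j.factorial := by gcongr
      _ = _ := by ring
  exact (Summable.of_norm_bounded
    ((Real.summable_pow_div_factorial (r ^ 2)).mul_left (r ^ m)) hbound).hasSum

def expProdTerm {K : Type*} [DivisionRing K] (x y : K) (pq : ℕ × ℕ) : K :=
  x ^ pq.1 / pq.1.factorial * (y ^ pq.2 / pq.2.factorial)

theorem hasSum_expProdTerm (x y : ℂ) : HasSum (expProdTerm x y) (exp x * exp y) := by
  have hexp (u : ℂ) : HasSum (fun n : ℕ => u ^ n / n.factorial) (exp u) := by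
    rw [exp_eq_exp_ℂ]
    exact NormedSpace.expSeries_div_hasSum_exp u
  have hnorm (u : ℂ) : Summable fun n : ℕ => ‖u ^ n / n.factorial‖ := by
    simpa only [norm_div, norm_pow, norm_natCast] using Real.summable_pow_div_factorial ‖u‖
  have hprod := summable_mul_of_summable_norm (hnorm x) (hnorm y)
  have hmul := (hexp x).mul (hexp y) hprod
  exact hmul

def diffMinEquiv : ℤ × ℕ ≃ ℕ × ℕ where
  toFun x := (x.2 + x.1.toNat, x.2 + (-x.1).toNat)
  invFun y := ((y.1 : ℤ) - y.2, min y.1 y.2)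
  left_inv x := by ext <;> dsimp only <;> omega
  right_inv y := by ext <;> dsimp only <;> omega

theorem diffMinEquiv_natCast (n j : ℕ) : diffMinEquiv (n, j) = (j + n, j) := by
  simp [diffMinEquiv]

theorem diffMinEquiv_neg_natCast (n j : ℕ) : diffMinEquiv (-n, j) = (j, j + n) := by
  simp [diffMinEquiv]

section FiberTerms

variable {K : Type*} [Field K] [CharZero K] (a : K) {w : K}

theorem expProdTerm_diffMinEquiv_natCast (hw : w ≠ 0) (n j : ℕ) :
    expProdTerm (a * w) (-(a * w⁻¹)) (diffMinEquiv (n, j))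
      = (-1) ^ j / (j.factorial * (j + n).factorial) * a ^ (2 * j + n) * w ^ n := by
  rw [diffMinEquiv_natCast, expProdTerm, mul_pow, neg_pow, mul_pow, inv_pow]
  field_simp
  ring

theorem expProdTerm_diffMinEquiv_neg_natCast (hw : w ≠ 0) (n j : ℕ) :
    expProdTerm (a * w) (-(a * w⁻¹)) (diffMinEquiv (-n, j))
      = (-1) ^ n * ((-1) ^ j / (j.factorial * (j + n).factorial) * a ^ (2 * j + n)) *
          (w ^ n)⁻¹ := by
  rw [diffMinEquiv_neg_natCast, expProdTerm, mul_pow, neg_pow, mul_pow, inv_pow]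
  field_simp
  ring

end FiberTerms

theorem hasSum_besselJint_mul_zpow (z w : ℂ) (hw : w ≠ 0) :
    HasSum (fun m : ℤ => besselJint m z * w ^ m) (exp (z / 2 * (w - w⁻¹))) := by
  have hdouble := diffMinEquiv.hasSum_iff.mpr (hasSum_expProdTerm (z / 2 * w) (-(z / 2 * w⁻¹)))
  rw [← exp_add, ← sub_eq_add_neg, ← mul_sub] at hdouble
  refine hdouble.prod_fiberwise fun m => ?_
  obtain ⟨n, rfl | rfl⟩ := Int.eq_nat_or_neg m
  · rw [besselJint_natCast, zpow_natCast]
    exact ((hasSum_besselJnat n z).mul_right (w ^ n)).congr_fun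
      (expProdTerm_diffMinEquiv_natCast _ hw n)
  · rw [besselJint_neg_natCast, zpow_neg, zpow_natCast]
    exact (((hasSum_besselJnat n z).mul_left ((-1) ^ n)).mul_right (w ^ n)⁻¹).congr_fun
      (expProdTerm_diffMinEquiv_neg_natCast _ hw n)

/-- The Jacobi–Anger expansion: `exp(i z sin θ) = ∑_{m ∈ ℤ} J_m(z) exp(i m θ)`. -/
theorem jacobi_anger (z : ℂ) (θ : ℝ) :
    Complex.exp (Complex.I * z * Real.sin θ)
      = ∑' m : ℤ, besselJint m z * Complex.exp (Complex.I * m * θ) := by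
  have hsin : I * z * Real.sin θ = z / 2 * (exp (θ * I) - (exp (θ * I))⁻¹) := by
    rw [← exp_neg, ofReal_sin, sin, neg_mul]
    linear_combination z * (exp (-(θ * I)) - exp (θ * I)) / 2 * I_sq
  have hpow (m : ℤ) : exp (I * m * θ) = exp (θ * I) ^ m := by
    rw [← exp_int_mul]
    ring_nf
  simp only [hpow, hsin]
  exact (hasSum_besselJint_mul_zpow z _ (exp_ne_zero _)).tsum_eq.symm
end

section
/- Minimization of the continuous interpolation-error functional: among positive measurable densities d on a measure space (Γ, μ) with ∫_Γ d dμ = 𝒩 fixed, the functional ∫_Γ h(x) d(x)^{−α} dμ (with h ≥ 0 measurable, α > 0) is minimized by d proportional to h^{1/(α+1)}, and the minimal value is 𝒩^{−α} (∫_Γ h^{1/(α+1)} dμ)^{α+1}. -/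
open MeasureTheory ENNReal

/-! Writing `h^{1/(α+1)} = (h d^{-α})^{1/(α+1)} d^{α/(α+1)}`, Hölder's inequality with the
weights `1/(α+1)` and `α/(α+1)` gives `∫ h^{1/(α+1)} ≤ (∫ h d^{-α})^{1/(α+1)} 𝒩^{α/(α+1)}`, which
is the lower bound. For `d = c h^{1/(α+1)}` the integrand `h d^{-α}` is `c^{-α} h^{1/(α+1)}`, so the
functional equals `c^{-α} ∫ h^{1/(α+1)}`; the mass constraint forces `c = 𝒩 / ∫ h^{1/(α+1)}`. -/

namespace ENNReal

theorem mul_rpow_neg_rpow_mul_rpow_mul {a d : ℝ≥0∞} (hd0 : d ≠ 0) (hdtop : d ≠ ⊤) {α β : ℝ}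
    (hβ : 0 ≤ β) : (a * d ^ (-α)) ^ β * d ^ (α * β) = a ^ β := by
  rw [mul_rpow_of_nonneg _ _ hβ, ← rpow_mul, mul_assoc, ← rpow_add _ _ hd0 hdtop, neg_mul,
    neg_add_cancel, rpow_zero, mul_one]

theorem mul_const_mul_rpow_one_div_add_one_rpow_neg {a c : ℝ≥0∞} (ha : a ≠ ⊤) (hc : c ≠ ⊤)
    {α : ℝ} (hα : 0 < α + 1) :
    a * (c * a ^ (1 / (α + 1))) ^ (-α) = c ^ (-α) * a ^ (1 / (α + 1)) := by
  obtain rfl | ha0 := eq_or_ne a 0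
  · rw [zero_mul, zero_rpow_of_pos (by positivity), mul_zero]
  have hexp : 1 + 1 / (α + 1) * -α = 1 / (α + 1) := by field_simp; ring
  rw [mul_rpow_of_ne_top hc (rpow_ne_top_of_nonneg (by positivity) ha), ← rpow_mul,
    mul_left_comm]
  congr 1
  nth_rw 1 [← rpow_one a]
  rw [← rpow_add _ _ ha0 ha, hexp]

end ENNReal

section

variable {Γ : Type*} [MeasurableSpace Γ] {μ : Measure Γ} {h d : Γ → ℝ≥0∞} {α : ℝ}

theorem lintegral_rpow_pow_le_lintegral_mul_rpow_neg_mul (hα : 0 < α) (hh : AEMeasurable h μ)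
    (hd : AEMeasurable d μ) (hd0 : ∀ᵐ x ∂μ, d x ≠ 0) (hdtop : ∀ᵐ x ∂μ, d x ≠ ⊤) :
    (∫⁻ x, h x ^ (1 / (α + 1)) ∂μ) ^ (α + 1)
      ≤ (∫⁻ x, h x * d x ^ (-α) ∂μ) * (∫⁻ x, d x ∂μ) ^ α := by
  have hα1 : 0 < α + 1 := by linarith
  have hholder := ENNReal.lintegral_mul_norm_pow_le (hh.mul (hd.pow_const (-α))) hd
    (p := 1 / (α + 1)) (q := α * (1 / (α + 1))) (by positivity) (by positivity)
    (by field_simp; ring)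
  rw [lintegral_congr_ae (by filter_upwards [hd0, hdtop] with x hx0 hxtop using
    ENNReal.mul_rpow_neg_rpow_mul_rpow_mul hx0 hxtop (by positivity))] at hholder
  calc (∫⁻ x, h x ^ (1 / (α + 1)) ∂μ) ^ (α + 1)
      ≤ ((∫⁻ x, h x * d x ^ (-α) ∂μ) ^ (1 / (α + 1))
          * (∫⁻ x, d x ∂μ) ^ (α * (1 / (α + 1)))) ^ (α + 1) :=
        rpow_le_rpow hholder hα1.le
    _ = (∫⁻ x, h x * d x ^ (-α) ∂μ) * (∫⁻ x, d x ∂μ) ^ α := by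
        rw [mul_rpow_of_nonneg _ _ hα1.le, ← rpow_mul, ← rpow_mul, mul_assoc,
          one_div_mul_cancel hα1.ne', rpow_one, mul_one]

theorem lintegral_mul_const_mul_rpow_one_div_add_one_rpow_neg (hα : 0 < α + 1)
    (hh : AEMeasurable h μ) (hfin : ∫⁻ x, h x ^ (1 / (α + 1)) ∂μ ≠ ⊤) {c : ℝ≥0∞} (hc : c ≠ ⊤) :
    ∫⁻ x, h x * (c * h x ^ (1 / (α + 1))) ^ (-α) ∂μ
      = c ^ (-α) * ∫⁻ x, h x ^ (1 / (α + 1)) ∂μ := by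
  have hh_ne_top : ∀ᵐ x ∂μ, h x ≠ ⊤ := by
    filter_upwards [ae_lt_top' (hh.pow_const _) hfin] with x hx
    exact (rpow_lt_top_iff_of_pos (by positivity)).1 hx |>.ne
  rw [← lintegral_const_mul'' _ (hh.pow_const _)]
  exact lintegral_congr_ae (by filter_upwards [hh_ne_top] with x hx using
    ENNReal.mul_const_mul_rpow_one_div_add_one_rpow_neg hx hc hα)

end

/-- Minimization of the continuous interpolation-error functional in
metric-based mesh adaptation: among positive densities `d` with
`∫ d dμ = 𝒩`, the functional `∫ h d^{−α} dμ` is bounded below by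
`𝒩^{−α} (∫ h^{1/(α+1)} dμ)^{α+1}`, and this value is attained by the density
`d* = 𝒩 h^{1/(α+1)} / ∫ h^{1/(α+1)} dμ` (which has total mass `𝒩`). -/
theorem optimal_mesh_density {Γ : Type*} [MeasurableSpace Γ] (μ : Measure Γ)
    (h : Γ → ℝ≥0∞) (hh : Measurable h) (α : ℝ) (hα : 0 < α)
    (N : ℝ≥0∞) (hN0 : 0 < N) (hNtop : N ≠ ⊤)
    (hfin0 : 0 < ∫⁻ x, (h x) ^ (1 / (α + 1)) ∂μ)
    (hfintop : (∫⁻ x, (h x) ^ (1 / (α + 1)) ∂μ) ≠ ⊤) :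
    (∀ d : Γ → ℝ≥0∞, Measurable d → (∀ x, 0 < d x) → (∀ x, d x ≠ ⊤) →
      (∫⁻ x, d x ∂μ) = N →
      N ^ (-α) * (∫⁻ x, (h x) ^ (1 / (α + 1)) ∂μ) ^ (α + 1)
        ≤ ∫⁻ x, h x * (d x) ^ (-α) ∂μ) ∧
    ((∫⁻ x, N * (h x) ^ (1 / (α + 1)) / (∫⁻ y, (h y) ^ (1 / (α + 1)) ∂μ) ∂μ) = N ∧
      (∫⁻ x, h x * (N * (h x) ^ (1 / (α + 1)) / (∫⁻ y, (h y) ^ (1 / (α + 1)) ∂μ)) ^ (-α) ∂μ)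
        = N ^ (-α) * (∫⁻ x, (h x) ^ (1 / (α + 1)) ∂μ) ^ (α + 1)) := by
  set I := ∫⁻ x, h x ^ (1 / (α + 1)) ∂μ
  have hI0 : I ≠ 0 := hfin0.ne'
  simp_rw [ENNReal.mul_div_right_comm]
  refine ⟨fun d hd hd0 hdtop hdN => ?_, ?_, ?_⟩
  · have hlower := lintegral_rpow_pow_le_lintegral_mul_rpow_neg_mul (μ := μ) hα hh.aemeasurable
      hd.aemeasurable (.of_forall fun x => (hd0 x).ne') (.of_forall hdtop)
    rw [hdN] at hlower
    rw [rpow_neg, mul_comm, ← div_eq_mul_inv]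
    exact div_le_of_le_mul hlower
  · rw [lintegral_const_mul'' _ (hh.pow_const _).aemeasurable]
    exact ENNReal.div_mul_cancel hI0 hfintop
  · rw [lintegral_mul_const_mul_rpow_one_div_add_one_rpow_neg (μ := μ) (by linarith)
      hh.aemeasurable hfintop (ENNReal.div_ne_top hNtop hI0), div_eq_mul_inv,
      mul_rpow_of_ne_zero hN0.ne' (ENNReal.inv_ne_zero.2 hfintop), inv_rpow, rpow_neg I,
      inv_inv, mul_assoc, rpow_add _ _ hI0 hfintop, rpow_one]
end
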